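/- arXiv:1809.06243 — 2 statements merged into one kernel-verified Lean document; each statement's English description precedes it below -/
import Mathlib

section
/- Let $a_1,\dots,a_n$ be nonzero real numbers and let $0 \le q \le n$. Then $\lim_{t\to\infty} \frac{\sum_{1\le j_1<\cdots<j_q\le n} \exp(-t(a_{j_1}+\cdots+a_{j_q}))}{\prod_{j=1}^n (1-\exp(-t a_j))} = (-1)^q$ if exactly $q$ of the numbers $a_1,\dots,a_n$ are negative, and the limit is $0$ otherwise. -/
open Filter Finset Topology

/-!
With `x j = exp (-t * a j)`, the `J`-th term of the quotient factors as
`∏_{j ∈ J} x j / (1 - x j) * ∏_{j ∉ J} (1 - x j)⁻¹`. As `t → ∞` the factor `x / (1 - x)` tends to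
`-1` or `0` and `(1 - x)⁻¹` to `0` or `1` according as `a j < 0` or `a j > 0`, so the only term
with a nonzero limit is the one where `J` is exactly the set of negative `a j`.
-/

lemma tendsto_inv_one_sub_atTop : Tendsto (fun x : ℝ => (1 - x)⁻¹) atTop (𝓝 0) :=
  tendsto_inv_atBot_zero.comp (tendsto_atBot_add_const_left _ 1 tendsto_neg_atTop_atBot)

lemma tendsto_inv_one_sub_nhds_zero : Tendsto (fun x : ℝ => (1 - x)⁻¹) (𝓝 0) (𝓝 1) := by
  have hcont : Tendsto (fun x : ℝ => 1 - x) (𝓝 0) (𝓝 (1 - 0)) :=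
    (continuous_const.sub continuous_id).tendsto 0
  simpa using hcont.inv₀ (by norm_num)

lemma tendsto_inv_one_sub_exp_neg_mul {a : ℝ} (ha : a ≠ 0) :
    Tendsto (fun t => (1 - Real.exp (-t * a))⁻¹) atTop (𝓝 (if a < 0 then 0 else 1)) := by
  rcases ha.lt_or_gt with hneg | hpos
  · rw [if_pos hneg]
    refine tendsto_inv_one_sub_atTop.comp (Real.tendsto_exp_atTop.comp ?_)
    simpa [neg_mul_comm] using tendsto_id.atTop_mul_const (neg_pos.mpr hneg)
  · rw [if_neg hpos.not_gt]
    refine tendsto_inv_one_sub_nhds_zero.comp (Real.tendsto_exp_atBot.comp ?_)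
    exact tendsto_neg_atTop_atBot.atBot_mul_const hpos

lemma div_one_sub_eq_inv_one_sub_sub_one {K : Type*} [Field K] {x : K} (hx : x ≠ 1) :
    x / (1 - x) = (1 - x)⁻¹ - 1 := by
  have : 1 - x ≠ 0 := sub_ne_zero.mpr hx.symm
  field_simp
  ring

lemma tendsto_exp_neg_mul_div_one_sub_exp_neg_mul {a : ℝ} (ha : a ≠ 0) :
    Tendsto (fun t => Real.exp (-t * a) / (1 - Real.exp (-t * a))) atTop
      (𝓝 (if a < 0 then -1 else 0)) := by
  have hlim : (if a < 0 then (-1 : ℝ) else 0) = (if a < 0 then 0 else 1) - 1 := by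
    split_ifs <;> norm_num
  rw [hlim]
  refine (tendsto_inv_one_sub_exp_neg_mul ha).sub_const 1 |>.congr' ?_
  filter_upwards [eventually_gt_atTop 0] with t ht
  refine (div_one_sub_eq_inv_one_sub_sub_one ?_).symm
  rw [Ne, Real.exp_eq_one_iff]
  exact mul_ne_zero (neg_ne_zero.mpr ht.ne') ha

lemma prod_div_prod_one_sub {ι K : Type*} [Fintype ι] [DecidableEq ι] [Field K]
    (x : ι → K) (J : Finset ι) :
    (∏ j ∈ J, x j) / ∏ j, (1 - x j) = ∏ j, if j ∈ J then x j / (1 - x j) else (1 - x j)⁻¹ := by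
  have hsplit : ∀ j, (if j ∈ J then x j / (1 - x j) else (1 - x j)⁻¹)
      = (if j ∈ J then x j else 1) * (1 - x j)⁻¹ := by
    intro j
    split_ifs <;> simp [div_eq_mul_inv]
  simp_rw [hsplit, prod_mul_distrib, prod_ite_mem, univ_inter, prod_inv_distrib, div_eq_mul_inv]

lemma prod_ite_mem_ite_eq_ite_eq {ι R : Type*} [Fintype ι] [DecidableEq ι] [CommRing R]
    (p : ι → Prop) [DecidablePred p] (J : Finset ι) :
    (∏ j, if j ∈ J then (if p j then (-1 : R) else 0) else (if p j then 0 else 1))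
      = if J = univ.filter p then (-1) ^ #J else 0 := by
  split_ifs with hJ
  · subst hJ
    calc (∏ j, if j ∈ univ.filter p then (if p j then (-1 : R) else 0) else (if p j then 0 else 1))
        = ∏ j, if p j then (-1 : R) else 1 :=
          prod_congr rfl fun j _ => by by_cases h : p j <;> simp [h]
      _ = (-1) ^ #(univ.filter p) := by simp [prod_ite]
  · obtain ⟨j, hj⟩ : ∃ j, ¬(j ∈ J ↔ p j) := by
      by_contra! h
      exact hJ (ext fun j => by simpa using h j)
    refine prod_eq_zero (mem_univ j) ?_
    by_cases hJj : j ∈ J <;> by_cases hpj : p j <;> simp_all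

lemma tendsto_exp_sum_div_prod_one_sub_exp {ι : Type*} [Fintype ι] [DecidableEq ι]
    {a : ι → ℝ} (ha : ∀ j, a j ≠ 0) (J : Finset ι) :
    Tendsto (fun t => Real.exp (-t * ∑ j ∈ J, a j) / ∏ j, (1 - Real.exp (-t * a j))) atTop
      (𝓝 (if J = univ.filter (a · < 0) then (-1) ^ #J else 0)) := by
  have hexp : ∀ t, Real.exp (-t * ∑ j ∈ J, a j) = ∏ j ∈ J, Real.exp (-t * a j) := fun t => by
    rw [mul_sum, Real.exp_sum]
  simp_rw [hexp, prod_div_prod_one_sub, ← prod_ite_mem_ite_eq_ite_eq]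
  refine tendsto_finsetProd _ fun j _ => ?_
  by_cases hj : j ∈ J
  · simpa only [hj, if_true] using tendsto_exp_neg_mul_div_one_sub_exp_neg_mul (ha j)
  · simpa only [hj, if_false] using tendsto_inv_one_sub_exp_neg_mul (ha j)

theorem tendsto_morse_quotient_general (n q : ℕ) (a : Fin n → ℝ) (ha : ∀ j, a j ≠ 0) :
    Tendsto (fun t : ℝ =>
        (∑ J ∈ Finset.univ.powersetCard q, Real.exp (-t * ∑ j ∈ J, a j)) /
          ∏ j, (1 - Real.exp (-t * a j)))
      atTop
      (nhds (if (Finset.univ.filter (fun j => a j < 0)).card = q then (-1 : ℝ) ^ q else 0)) := by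
  have hsum := tendsto_finsetSum (univ.powersetCard q) fun J _ =>
    tendsto_exp_sum_div_prod_one_sub_exp ha J
  simp_rw [sum_div]
  convert hsum using 2
  by_cases h : #(univ.filter (a · < 0)) = q <;> simp [h]

/-- For nonzero reals `a 1, …, a n` and `0 ≤ q ≤ n`, the quotient
`(∑_{|J|=q} e^{-t ∑_{j∈J} a j}) / ∏_j (1 - e^{-t a j})` tends, as `t → ∞`, to `(-1)^q`
if exactly `q` of the `a j` are negative, and to `0` otherwise. -/
theorem tendsto_morse_quotient (n q : ℕ) (hq : q ≤ n) (a : Fin n → ℝ) (ha : ∀ j, a j ≠ 0) :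
    Tendsto (fun t : ℝ =>
        (∑ J ∈ Finset.univ.powersetCard q, Real.exp (-t * ∑ j ∈ J, a j)) /
          ∏ j, (1 - Real.exp (-t * a j)))
      atTop
      (nhds (if (Finset.univ.filter (fun j => a j < 0)).card = q then (-1 : ℝ) ^ q else 0)) :=
  tendsto_morse_quotient_general n q a ha
end

section
/- Let $(V^\bullet, d)$ be a cochain complex of finite-dimensional complex inner product spaces $V^0 \to V^1 \to \cdots \to V^n$ with $d^2 = 0$, let $d^*$ be the adjoint of $d$, and let $\Delta = (d + d^*)^2$. Then for every $t > 0$ and every $0 \le q \le n$, $\sum_{j=0}^q (-1)^{q-j} \dim H^j(V^\bullet) \le \sum_{j=0}^q (-1)^{q-j} \mathrm{Tr}\big[ e^{-t\Delta}|_{V^j} \big]$, with equality when $q = n$. -/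
/-!
Write `Δ_j = d_j* d_j + d_{j-1} d_{j-1}*`. Since `d² = 0` the two summands annihilate each other,
so `e^{-tΔ_j} = e^{-t d_j* d_j} + e^{-t d_{j-1} d_{j-1}*} - 1`; and since `Tr (AB)^k = Tr (BA)^k`
for `k ≥ 1`, the trace of `e^{-t d_{j-1} d_{j-1}*}` on `V^j` is that of `e^{-t d_{j-1}* d_{j-1}}`
on `V^{j-1}` shifted by `dim V^j - dim V^{j-1}`. With rank–nullity, the `j`-th term
`Tr e^{-tΔ_j} - dim H^j` becomes `e_j + e_{j-1}`, where `e_j = Tr e^{-t d_j* d_j} - dim ker d_j`,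
so the alternating sum collapses to `e_q`. In an eigenbasis of `d_q* d_q` each zero eigenvalue
contributes `1` and every other one a positive number, so `e_q ≥ 0`; for `q = n` we have `d_n = 0`
and `e_n = 0`.
-/

open Finset Module

/-- Dimension of the `j`-th cohomology of the cochain complex `(V^•, d)`:
`dim H^j = dim ker (d_j) - dim im (d_{j-1})` (with `im (d_{-1}) = 0`). -/
noncomputable def cohomDim (dm : ℕ → ℕ)
    (d : ∀ j : ℕ, EuclideanSpace ℂ (Fin (dm j)) →L[ℂ] EuclideanSpace ℂ (Fin (dm (j + 1)))) :
    ℕ → ℕ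
  | 0 => finrank ℂ (LinearMap.ker (d 0).toLinearMap)
  | (j + 1) => finrank ℂ (LinearMap.ker (d (j + 1)).toLinearMap) - finrank ℂ (LinearMap.range (d j).toLinearMap)

open NormedSpace ContinuousLinearMap
open scoped Nat

theorem sum_range_neg_one_pow_mul_eq_of_succ_eq_add {R : Type*} [CommRing R] {x e : ℕ → R}
    (h0 : x 0 = e 0) (hsucc : ∀ j, x (j + 1) = e (j + 1) + e j) (q : ℕ) :
    ∑ j ∈ range (q + 1), (-1) ^ (q - j) * x j = e q := by
  induction q with
  | zero => simp [h0]
  | succ q ih =>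
    have hflip : ∀ j ∈ range (q + 1), (-1 : R) ^ (q + 1 - j) * x j = -((-1) ^ (q - j) * x j) :=
      fun j hj => by rw [Nat.succ_sub (mem_range_succ_iff.1 hj), pow_succ]; ring
    rw [sum_range_succ, Nat.sub_self, pow_zero, one_mul, sum_congr rfl hflip, sum_neg_distrib, ih,
      hsucc]
    ring

theorem LinearMap.trace_comp_pow_succ_comm {R M N : Type*} [CommRing R] [AddCommGroup M]
    [Module R M] [Module.Free R M] [Module.Finite R M] [AddCommGroup N] [Module R N]
    [Module.Free R N] [Module.Finite R N] (f : M →ₗ[R] N) (g : N →ₗ[R] M) (n : ℕ) :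
    trace R M ((g ∘ₗ f) ^ (n + 1)) = trace R N ((f ∘ₗ g) ^ (n + 1)) := by
  have hpow : (g ∘ₗ f) ^ (n + 1) = g ∘ₗ (((f ∘ₗ g) ^ n) ∘ₗ f) := by
    induction n with
    | zero => rfl
    | succ n ih => rw [pow_succ, ih, pow_succ]; rfl
  rw [hpow, trace_comp_comm']
  rfl

theorem RCLike.exp_ofReal {𝕜 : Type*} [RCLike 𝕜] (r : ℝ) : exp (r : 𝕜) = Real.exp r := by
  rw [Real.exp_eq_exp_ℝ, ← RCLike.algebraMap_eq_ofReal]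
  exact (algebraMap_exp_comm r).symm

theorem exp_add_of_mul_eq_zero {𝔸 : Type*} [NormedRing 𝔸] [NormedAlgebra ℚ 𝔸] [CompleteSpace 𝔸]
    {x y : 𝔸} (hxy : x * y = 0) (hyx : y * x = 0) : exp (x + y) = exp x + exp y - 1 := by
  have hx : x * exp y = x := by
    simpa using (show SemiconjBy x y 0 by simp [SemiconjBy, hxy]).exp_right.eq
  have hexp : exp x * (exp y - 1) = exp y - 1 := by
    simpa using
      (show SemiconjBy (exp y - 1) 0 x by simp [SemiconjBy, mul_sub, hx]).exp_right.eq.symm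
  rw [exp_add_of_commute (hxy.trans hyx.symm)]
  calc exp x * exp y = exp x * (exp y - 1) + exp x := by noncomm_ring
    _ = exp x + exp y - 1 := by rw [hexp]; abel

theorem exp_apply_of_apply_eq_smul {𝕜 E : Type*} [RCLike 𝕜] [NormedAddCommGroup E]
    [NormedSpace 𝕜 E] [CompleteSpace E] {X : E →L[𝕜] E} {v : E} {c : 𝕜} (h : X v = c • v) :
    exp X v = exp c • v := by
  have hpow : ∀ n : ℕ, (X ^ n) v = c ^ n • v := by
    intro n
    induction n with
    | zero => simp
    | succ n ih => simp [pow_succ', ih, h, smul_smul, mul_comm]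
  refine ((exp_series_hasSum_exp' (𝕂 := 𝕜) X).mapL (apply 𝕜 E v)).unique ?_
  simpa [hpow, smul_smul] using (exp_series_hasSum_exp' (𝕂 := 𝕜) c).smul_const v

section Trace

variable {𝕜 E F : Type*} [RCLike 𝕜] [NormedAddCommGroup E] [NormedSpace 𝕜 E]
  [FiniteDimensional 𝕜 E] [NormedAddCommGroup F] [NormedSpace 𝕜 F] [FiniteDimensional 𝕜 F]

theorem hasSum_trace_exp (X : E →L[𝕜] E) :
    HasSum (fun n => (n !⁻¹ : 𝕜) * LinearMap.trace 𝕜 E (X ^ n).toLinearMap)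
      (LinearMap.trace 𝕜 E (exp X).toLinearMap) := by
  have := FiniteDimensional.complete 𝕜 E
  let tr : (E →L[𝕜] E) →L[𝕜] 𝕜 :=
    LinearMap.toContinuousLinearMap (LinearMap.trace 𝕜 E ∘ₗ coeLM 𝕜)
  simpa [tr] using (exp_series_hasSum_exp' (𝕂 := 𝕜) X).mapL tr

theorem trace_exp_comp_sub_finrank (A : E →L[𝕜] F) (B : F →L[𝕜] E) :
    LinearMap.trace 𝕜 E (exp (B ∘L A)).toLinearMap - finrank 𝕜 E =
      LinearMap.trace 𝕜 F (exp (A ∘L B)).toLinearMap - finrank 𝕜 F := by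
  have hdiff := (hasSum_trace_exp (B ∘L A)).sub (hasSum_trace_exp (A ∘L B))
  have hterm : ∀ n : ℕ, (n !⁻¹ : 𝕜) * LinearMap.trace 𝕜 E ((B ∘L A) ^ n).toLinearMap -
      (n !⁻¹ : 𝕜) * LinearMap.trace 𝕜 F ((A ∘L B) ^ n).toLinearMap =
        if n = 0 then (finrank 𝕜 E - finrank 𝕜 F : 𝕜) else 0 := by
    rintro (_ | n)
    · simp
    · rw [if_neg n.succ_ne_zero, toLinearMap_pow, toLinearMap_pow, toLinearMap_comp,
        toLinearMap_comp, LinearMap.trace_comp_pow_succ_comm, sub_self]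
  linear_combination hdiff.unique ((hasSum_ite_eq 0 _).congr_fun hterm)

end Trace

section InnerProductSpace

variable {𝕜 E : Type*} [RCLike 𝕜] [NormedAddCommGroup E] [InnerProductSpace 𝕜 E]
  [FiniteDimensional 𝕜 E]

theorem finrank_ker_le_re_trace_exp_smul {T : E →L[𝕜] E} (hT : (T : E →ₗ[𝕜] E).IsSymmetric)
    (s : ℝ) :
    (finrank 𝕜 (LinearMap.ker (T : E →ₗ[𝕜] E)) : ℝ) ≤
      RCLike.re (LinearMap.trace 𝕜 E (exp ((s : 𝕜) • T)).toLinearMap) := by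
  have := FiniteDimensional.complete 𝕜 E
  set b := hT.eigenvectorBasis rfl
  set μ := hT.eigenvalues rfl
  have hexp : ∀ i, exp ((s : 𝕜) • T) (b i) = (Real.exp (s * μ i) : 𝕜) • b i := fun i => by
    rw [← RCLike.exp_ofReal]
    refine exp_apply_of_apply_eq_smul ?_
    rw [smul_apply, ← coe_coe, hT.apply_eigenvectorBasis, smul_smul]
    norm_cast
  have htrace : RCLike.re (LinearMap.trace 𝕜 E (exp ((s : 𝕜) • T)).toLinearMap) =
      ∑ i, Real.exp (s * μ i) := by
    simp [LinearMap.trace_eq_sum_inner _ b, hexp, inner_smul_right]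
  have hker : finrank 𝕜 (LinearMap.ker (T : E →ₗ[𝕜] E)) = #{i | μ i = 0} := by
    rw [← Module.End.eigenspace_zero, ← hT.card_filter_eigenvalues_eq rfl]
    simp [μ]
  rw [htrace, hker]
  calc (#{i | μ i = 0} : ℝ) = ∑ i with μ i = 0, Real.exp (s * μ i) := by
        rw [Finset.cast_card]
        exact sum_congr rfl fun i hi => by simp [(mem_filter.1 hi).2]
    _ ≤ ∑ i, Real.exp (s * μ i) :=
        sum_le_sum_of_subset_of_nonneg (filter_subset _ _) fun _ _ _ => by positivity

end InnerProductSpace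

section Laplacian

variable {E F G : Type*} [NormedAddCommGroup E] [InnerProductSpace ℂ E] [FiniteDimensional ℂ E]
  [NormedAddCommGroup F] [InnerProductSpace ℂ F] [FiniteDimensional ℂ F]
  [NormedAddCommGroup G] [InnerProductSpace ℂ G] [FiniteDimensional ℂ G]

/-- The contribution of the nonzero spectrum of `A* A` to the heat trace `Tr e^{-t A* A}`. -/
noncomputable def heatTraceExcess (A : E →L[ℂ] F) (t : ℝ) : ℝ :=
  (LinearMap.trace ℂ E (exp ((-t : ℂ) • (adjoint A ∘L A))).toLinearMap).re -
    finrank ℂ (LinearMap.ker A.toLinearMap)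

theorem heatTraceExcess_nonneg (A : E →L[ℂ] F) (t : ℝ) : 0 ≤ heatTraceExcess A t := by
  have h := finrank_ker_le_re_trace_exp_smul (isPositive_adjoint_comp_self A).isSymmetric (-t)
  rw [ker_adjoint_comp_self] at h
  rw [heatTraceExcess, sub_nonneg]
  simpa using h

theorem heatTraceExcess_zero (t : ℝ) : heatTraceExcess (0 : E →L[ℂ] F) t = 0 := by
  rw [heatTraceExcess, toLinearMap_zero, LinearMap.ker_zero, finrank_top]
  simp

theorem trace_exp_smul_laplacian {A : E →L[ℂ] F} {B : F →L[ℂ] G} (hBA : B ∘L A = 0) (c : ℂ) :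
    LinearMap.trace ℂ F (exp (c • (adjoint B ∘L B + A ∘L adjoint A))).toLinearMap =
      LinearMap.trace ℂ F (exp (c • (adjoint B ∘L B))).toLinearMap +
        LinearMap.trace ℂ E (exp (c • (adjoint A ∘L A))).toLinearMap - finrank ℂ E := by
  let _ : NormedAlgebra ℚ (F →L[ℂ] F) := NormedAlgebra.restrictScalars ℚ ℂ (F →L[ℂ] F)
  have hBA_apply : ∀ v, B (A v) = 0 := fun v => congr($hBA v)
  have hBA_adjoint : adjoint A ∘L adjoint B = 0 := by rw [← adjoint_comp, hBA, map_zero]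
  have hBA_adjoint_apply : ∀ v, adjoint A (adjoint B v) = 0 := fun v => congr($hBA_adjoint v)
  have hXY : (c • (adjoint B ∘L B)) * (c • (A ∘L adjoint A)) = 0 := by
    ext v
    simp [hBA_apply]
  have hYX : (c • (A ∘L adjoint A)) * (c • (adjoint B ∘L B)) = 0 := by
    ext v
    simp [hBA_adjoint_apply]
  have hswap := trace_exp_comp_sub_finrank (c • A) (adjoint A)
  rw [comp_smul, smul_comp] at hswap
  rw [smul_add, exp_add_of_mul_eq_zero hXY hYX, toLinearMap_sub, toLinearMap_add, map_sub, map_add,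
    toLinearMap_one, LinearMap.trace_one]
  linear_combination -hswap

theorem re_trace_exp_laplacian_sub_eq_heatTraceExcess_add {A : E →L[ℂ] F} {B : F →L[ℂ] G}
    (hBA : B ∘L A = 0) (t : ℝ) :
    (LinearMap.trace ℂ F (exp ((-t : ℂ) • (adjoint B ∘L B + A ∘L adjoint A))).toLinearMap).re -
        ((finrank ℂ (LinearMap.ker B.toLinearMap) : ℝ) -
          finrank ℂ (LinearMap.range A.toLinearMap)) =
      heatTraceExcess B t + heatTraceExcess A t := by
  have hrank : (finrank ℂ (LinearMap.range A.toLinearMap) : ℝ) +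
      finrank ℂ (LinearMap.ker A.toLinearMap) = finrank ℂ E := by
    exact_mod_cast LinearMap.finrank_range_add_finrank_ker A.toLinearMap
  rw [trace_exp_smul_laplacian hBA, heatTraceExcess, heatTraceExcess]
  simp only [Complex.sub_re, Complex.add_re, Complex.natCast_re]
  linear_combination hrank

end Laplacian

theorem cohomDim_succ_eq {dm : ℕ → ℕ}
    {d : ∀ j : ℕ, EuclideanSpace ℂ (Fin (dm j)) →L[ℂ] EuclideanSpace ℂ (Fin (dm (j + 1)))}
    (hd2 : ∀ j, d (j + 1) ∘L d j = 0) (j : ℕ) :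
    (cohomDim dm d (j + 1) : ℝ) =
      finrank ℂ (LinearMap.ker (d (j + 1)).toLinearMap) -
        finrank ℂ (LinearMap.range (d j).toLinearMap) := by
  refine Nat.cast_sub (Submodule.finrank_mono ?_)
  rintro _ ⟨v, rfl⟩
  exact congr($(hd2 j) v)

/-- For a cochain complex `V^0 → ⋯ → V^n` of finite-dimensional complex inner product spaces
with `d² = 0`, adjoint `d*` and Laplacian `Δ = (d + d*)²` (degreewise
`Δ_j = d_j* d_j + d_{j-1} d_{j-1}*`), for every `t > 0` and `0 ≤ q ≤ n`,
`∑_{j=0}^q (-1)^{q-j} dim H^j ≤ ∑_{j=0}^q (-1)^{q-j} Tr [e^{-tΔ}|_{V^j}]`,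
with equality for `q = n`. -/
theorem heat_trace_morse_inequalities (n : ℕ) (dm : ℕ → ℕ) (hdm : ∀ j, n < j → dm j = 0)
    (d : ∀ j : ℕ, EuclideanSpace ℂ (Fin (dm j)) →L[ℂ] EuclideanSpace ℂ (Fin (dm (j + 1))))
    (hd2 : ∀ j, d (j + 1) ∘L d j = 0)
    (Δ : ∀ j : ℕ, EuclideanSpace ℂ (Fin (dm j)) →L[ℂ] EuclideanSpace ℂ (Fin (dm j)))
    (hΔ0 : Δ 0 = ContinuousLinearMap.adjoint (d 0) ∘L d 0)
    (hΔ : ∀ j, Δ (j + 1) =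
      ContinuousLinearMap.adjoint (d (j + 1)) ∘L d (j + 1) +
        d j ∘L ContinuousLinearMap.adjoint (d j)) :
    ∀ t : ℝ, 0 < t → ∀ q ≤ n,
      ((∑ j ∈ Finset.range (q + 1), (-1 : ℝ) ^ (q - j) * (cohomDim dm d j : ℝ)) ≤
        ∑ j ∈ Finset.range (q + 1), (-1 : ℝ) ^ (q - j) *
          (LinearMap.trace ℂ (EuclideanSpace ℂ (Fin (dm j)))
            (NormedSpace.exp ((-t : ℂ) • (Δ j))).toLinearMap).re) ∧
      (q = n →
        (∑ j ∈ Finset.range (q + 1), (-1 : ℝ) ^ (q - j) * (cohomDim dm d j : ℝ)) =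
          ∑ j ∈ Finset.range (q + 1), (-1 : ℝ) ^ (q - j) *
            (LinearMap.trace ℂ (EuclideanSpace ℂ (Fin (dm j)))
              (NormedSpace.exp ((-t : ℂ) • (Δ j))).toLinearMap).re) := by
  intro t _ q _
  have halternating : ∑ j ∈ range (q + 1), (-1 : ℝ) ^ (q - j) *
        (LinearMap.trace ℂ _ (exp ((-t : ℂ) • (Δ j))).toLinearMap).re -
      ∑ j ∈ range (q + 1), (-1 : ℝ) ^ (q - j) * (cohomDim dm d j : ℝ) =
        heatTraceExcess (d q) t := by
    rw [← sum_sub_distrib]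
    simp_rw [← mul_sub]
    refine sum_range_neg_one_pow_mul_eq_of_succ_eq_add (e := fun j => heatTraceExcess (d j) t) ?_
      (fun j => ?_) q
    · rw [hΔ0]
      rfl
    · rw [hΔ j, cohomDim_succ_eq hd2]
      exact re_trace_exp_laplacian_sub_eq_heatTraceExcess_add (hd2 j) t
  refine ⟨by linarith [heatTraceExcess_nonneg (d q) t], fun hqn => ?_⟩
  subst hqn
  have : Subsingleton (EuclideanSpace ℂ (Fin (dm (q + 1)))) := by
    rw [hdm (q + 1) q.lt_succ_self]
    infer_instance
  rw [Subsingleton.elim (d q) 0, heatTraceExcess_zero] at halternating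
  linarith
end
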